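/- arXiv:2410.22842 — 2 statements merged into one kernel-verified Lean document; each statement's English description precedes it below -/
import Mathlib

section
/- For every finite tree $H$ that is not a path, there exists a (possibly infinite) simple graph $G$ with minimum degree at least $3$ such that $G$ has no induced subgraph isomorphic to $H$ and $G$ has no cycle of length a power of $2$. (Such a $G$ is obtained from an infinite tree in which every vertex has degree $3$ by replacing each vertex with a triangle and joining the triangles of adjacent vertices by single edges; this graph is claw-free, its only cycles are triangles, and in a claw-free graph every induced tree is a path.) -/
/-!
Truncate the cubic tree: replace each vertex by a triangle, one corner per incident edge. Every
edge between two triangles is a bridge, so every cycle stays inside one triangle and has length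
`3`. Each corner has its two triangle-mates, which are adjacent, and exactly one neighbour outside
its triangle, so the graph is claw-free. An induced copy of a claw-free tree has no vertex of
degree `3` (its neighbours would span a triangle), and a finite tree of maximum degree `2` is a
path: distances from a leaf enumerate its vertices.
-/

namespace SimpleGraph

variable {V : Type*} {G : SimpleGraph V}

lemma Walk.apply_eq_of_mem_support {β : Type*} {f : V → β} {u v : V}
    (p : G.Walk u v) (h : ∀ d ∈ p.darts, f d.fst = f d.snd) {y : V} (hy : y ∈ p.support) :
    f y = f u := by
  induction p with
  | nil => simp_all
  | cons hadj p ih =>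
    simp only [Walk.darts_cons, List.mem_cons, forall_eq_or_imp] at h
    rcases List.mem_cons.mp (Walk.support_cons _ _ ▸ hy) with rfl | hy
    · rfl
    · exact (ih h.2 hy).trans h.1.symm

lemma Connected.exists_adj_dist_eq_of_dist_eq_add_one (hG : G.Connected) {u y : V} {m : ℕ}
    (h : G.dist u y = m + 1) : ∃ w, G.Adj w y ∧ G.dist u w = m := by
  obtain ⟨p, hp⟩ := (hG.preconnected y u).exists_walk_length_eq_dist
  rw [dist_comm, h] at hp
  cases p with
  | nil => simp at hp
  | @cons _ w _ hadj q =>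
    refine ⟨w, hadj.symm, le_antisymm ?_ ?_⟩
    · have hq : q.length = m := by simpa using hp
      simpa [dist_comm, hq] using dist_le q
    · have := hG.dist_triangle (u := u) (v := w) (w := y)
      rw [dist_eq_one_iff_adj.mpr hadj.symm] at this
      omega

lemma Connected.dist_injective_of_degree_le_two [G.LocallyFinite] (hG : G.Connected)
    (hdeg : ∀ v, G.degree v ≤ 2) {u : V} (hu : G.degree u ≤ 1) :
    Function.Injective (G.dist u) := by
  suffices ∀ m a b, G.dist u a = m → G.dist u b = m → a = b from fun a b h => this _ a b rfl h.symm
  intro m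
  induction m with
  | zero =>
    exact fun a b ha hb => (hG.dist_eq_zero_iff.mp ha).symm.trans (hG.dist_eq_zero_iff.mp hb)
  | succ m ih =>
    intro a b ha hb
    obtain ⟨z, hza, hz⟩ := hG.exists_adj_dist_eq_of_dist_eq_add_one ha
    obtain ⟨z', hzb, hz'⟩ := hG.exists_adj_dist_eq_of_dist_eq_add_one hb
    obtain rfl := ih z z' hz hz'
    by_contra hab
    cases m with
    | zero =>
      obtain rfl := hG.dist_eq_zero_iff.mp hz
      exact hu.not_gt (Finset.one_lt_card.mpr ⟨a, by simpa, b, by simpa, hab⟩)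
    | succ m =>
      obtain ⟨w, hwz, hw⟩ := hG.exists_adj_dist_eq_of_dist_eq_add_one hz
      have hwa : w ≠ a := by rintro rfl; omega
      have hwb : w ≠ b := by rintro rfl; omega
      exact (hdeg z).not_gt <| Finset.two_lt_card.mpr
        ⟨w, by simpa using hwz.symm, a, by simpa, b, by simpa, hwa, hwb, hab⟩

lemma Connected.adj_iff_of_dist_injective (hG : G.Connected) {u : V}
    (hinj : Function.Injective (G.dist u)) {a b : V} :
    G.Adj a b ↔ G.dist u a + 1 = G.dist u b ∨ G.dist u b + 1 = G.dist u a := by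
  constructor
  · intro hab
    have hne : G.dist u a ≠ G.dist u b := fun h => hab.ne (hinj h)
    rcases hab.diff_dist_adj (u := u) with h | h | h <;> omega
  · have pred {a b : V} (h : G.dist u a + 1 = G.dist u b) : G.Adj a b := by
      obtain ⟨w, hwb, hw⟩ := hG.exists_adj_dist_eq_of_dist_eq_add_one h.symm
      rwa [← hinj hw]
    rintro (h | h)
    · exact pred h
    · exact (pred h).symm

section Finite

variable [Fintype V]

lemma IsTree.exists_degree_le_one [DecidableRel G.Adj] (hG : G.IsTree) : ∃ v, G.degree v ≤ 1 := by
  cases subsingleton_or_nontrivial V with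
  | inl _ =>
    obtain ⟨v⟩ := hG.connected.nonempty
    exact ⟨v, by simp [degree]⟩
  | inr _ =>
    obtain ⟨v, hv⟩ := hG.exists_vert_degree_one_of_nontrivial
    exact ⟨v, hv.le⟩

theorem IsTree.exists_iso_pathGraph_of_degree_le_two [DecidableRel G.Adj] (hG : G.IsTree)
    (hdeg : ∀ v, G.degree v ≤ 2) : ∃ n, Nonempty (G ≃g pathGraph n) := by
  obtain ⟨u, hu⟩ := hG.exists_degree_le_one
  have hinj := hG.connected.dist_injective_of_degree_le_two hdeg hu
  have hlt (v : V) : G.dist u v < Fintype.card V := by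
    obtain ⟨p, hp⟩ := (hG.connected.preconnected u v).exists_walk_length_eq_dist
    exact hp ▸ (p.isPath_of_length_eq_dist hp).length_lt
  have hbij : Function.Bijective fun v => (⟨G.dist u v, hlt v⟩ : Fin (Fintype.card V)) :=
    (Fintype.bijective_iff_injective_and_card _).mpr
      ⟨fun a b h => hinj (Fin.mk.inj_iff.mp h), (Fintype.card_fin _).symm⟩
  refine ⟨_, ⟨Equiv.ofBijective _ hbij, ?_⟩⟩
  intro a b
  simp only [Equiv.ofBijective_apply, pathGraph_adj]
  exact (hG.connected.adj_iff_of_dist_injective hinj).symm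

end Finite

def IsClawFree (G : SimpleGraph V) : Prop :=
  ∀ ⦃x a b c : V⦄, G.Adj x a → G.Adj x b → G.Adj x c → a ≠ b → a ≠ c → b ≠ c →
    G.Adj a b ∨ G.Adj a c ∨ G.Adj b c

lemma IsClawFree.comap {W : Type*} {H : SimpleGraph W} (f : H ↪g G) (hG : G.IsClawFree) :
    H.IsClawFree := by
  intro x a b c ha hb hc hab hac hbc
  simpa only [f.map_rel_iff] using
    hG (f.map_rel_iff.mpr ha) (f.map_rel_iff.mpr hb) (f.map_rel_iff.mpr hc)
      (f.injective.ne hab) (f.injective.ne hac) (f.injective.ne hbc)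

lemma IsAcyclic.degree_le_two_of_isClawFree [G.LocallyFinite] (hA : G.IsAcyclic)
    (hC : G.IsClawFree) (v : V) : G.degree v ≤ 2 := by
  classical
  by_contra! h
  obtain ⟨a, ha, b, hb, c, hc, hab, hac, hbc⟩ := Finset.two_lt_card.mp h
  rw [mem_neighborFinset] at ha hb hc
  have triangle {a b : V} (ha : G.Adj v a) (hb : G.Adj v b) : ¬ G.Adj a b := fun hab =>
    hA.cliqueFree le_rfl {v, a, b} (is3Clique_triple_iff.mpr ⟨ha, hb, hab⟩)
  rcases hC ha hb hc hab hac hbc with h | h | h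
  exacts [triangle ha hb h, triangle ha hc h, triangle hb hc h]

theorem IsTree.exists_iso_pathGraph_of_isClawFree [Fintype V] (hG : G.IsTree) (hC : G.IsClawFree) :
    ∃ n, Nonempty (G ≃g pathGraph n) := by
  classical
  exact hG.exists_iso_pathGraph_of_degree_le_two (hG.isAcyclic.degree_le_two_of_isClawFree hC)

end SimpleGraph

abbrev ReducedWord (α : Type*) := {l : List α // l.IsChain (· ≠ ·)}

namespace SimpleGraph

/-- The vertices of the `|α|`-regular tree are the reduced words over `α`, the edge of colour `i`
joining `v` and `i :: v` (read as `tail v` when `v` starts with `i`). The vertex `(v, i)` is the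
corner of the clique replacing `v` that lies on the edge of colour `i`. -/
def truncatedTree (α : Type*) : SimpleGraph (ReducedWord α × α) where
  Adj x y := (x.1 = y.1 ∧ x.2 ≠ y.2) ∨ (x.2 = y.2 ∧ (y.1.1 = x.2 :: x.1.1 ∨ x.1.1 = x.2 :: y.1.1))
  symm := by
    constructor
    rintro ⟨v, i⟩ ⟨w, j⟩ (⟨rfl, h⟩ | ⟨rfl, h⟩)
    exacts [Or.inl ⟨rfl, h.symm⟩, Or.inr ⟨rfl, h.symm⟩]
  loopless := by
    constructor
    rintro ⟨⟨v, _⟩, i⟩ (⟨_, h⟩ | ⟨_, h | h⟩)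
    exacts [h rfl, List.cons_ne_self i v h.symm, List.cons_ne_self i v h.symm]

variable {α : Type*}

lemma truncatedTree_adj {x y : ReducedWord α × α} : (truncatedTree α).Adj x y ↔
    (x.1 = y.1 ∧ x.2 ≠ y.2) ∨ (x.2 = y.2 ∧ (y.1.1 = x.2 :: x.1.1 ∨ x.1.1 = x.2 :: y.1.1)) :=
  Iff.rfl

lemma truncatedTree_exists_adj_snd_eq (x : ReducedWord α × α) :
    ∃ w, (truncatedTree α).Adj x (w, x.2) := by
  obtain ⟨⟨v, hv⟩, i⟩ := x
  by_cases h : v.head? = some i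
  · obtain ⟨t, rfl⟩ : ∃ t, v = i :: t := ⟨v.tail, by cases v <;> simp_all⟩
    exact ⟨⟨t, hv.tail⟩, Or.inr ⟨rfl, Or.inr rfl⟩⟩
  · refine ⟨⟨i :: v, List.isChain_cons.mpr ⟨?_, hv⟩⟩, Or.inr ⟨rfl, Or.inl rfl⟩⟩
    rintro j hj rfl
    exact h hj

lemma truncatedTree_eq_of_adj_of_adj_of_snd_eq {x a b : ReducedWord α × α}
    (ha : (truncatedTree α).Adj x a) (hb : (truncatedTree α).Adj x b)
    (ha₂ : a.2 = x.2) (hb₂ : b.2 = x.2) : a = b := by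
  obtain ⟨⟨v, hv⟩, i⟩ := x
  obtain ⟨⟨w, hw⟩, j⟩ := a
  obtain ⟨⟨w', hw'⟩, k⟩ := b
  simp only at ha₂ hb₂
  subst ha₂ hb₂
  simp only [truncatedTree_adj, ne_eq, not_true_eq_false, and_false, true_and, false_or] at ha hb
  rcases ha with rfl | rfl <;> rcases hb with h | h
  · simp [h]
  · subst h; simp at hw
  · subst h; simp at hw'
  · simp_all

lemma truncatedTree_isClawFree : (truncatedTree α).IsClawFree := by
  have fst_or_snd {x y} (h : (truncatedTree α).Adj x y) : y.1 = x.1 ∨ y.2 = x.2 := by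
    rcases h with ⟨h, -⟩ | ⟨h, -⟩
    exacts [Or.inl h.symm, Or.inr h.symm]
  have same_clique {x a b : ReducedWord α × α} (ha : a.1 = x.1) (hb : b.1 = x.1) (hab : a ≠ b) :
      (truncatedTree α).Adj a b :=
    Or.inl ⟨ha.trans hb.symm, fun h => hab (Prod.ext (ha.trans hb.symm) h)⟩
  intro x a b c ha hb hc hab hac hbc
  rcases fst_or_snd ha with ha' | ha' <;> rcases fst_or_snd hb with hb' | hb' <;>
    rcases fst_or_snd hc with hc' | hc'
  all_goals first
    | exact Or.inl (same_clique ha' hb' hab)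
    | exact Or.inr (Or.inl (same_clique ha' hc' hac))
    | exact Or.inr (Or.inr (same_clique hb' hc' hbc))
    | exact absurd (truncatedTree_eq_of_adj_of_adj_of_snd_eq ha hb ha' hb') hab
    | exact absurd (truncatedTree_eq_of_adj_of_adj_of_snd_eq ha hc ha' hc') hac
    | exact absurd (truncatedTree_eq_of_adj_of_adj_of_snd_eq hb hc hb' hc') hbc

lemma truncatedTree_eq_of_adj_of_suffix {v w : ReducedWord α} {i : α} (hw : w.1 = i :: v.1)
    {y z : ReducedWord α × α} (hyz : (truncatedTree α).Adj y z) (hy : w.1 <:+ y.1.1)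
    (hz : ¬ w.1 <:+ z.1.1) : y = (w, i) ∧ z = (v, i) := by
  obtain ⟨⟨a, ha⟩, j⟩ := y
  obtain ⟨⟨b, hb⟩, k⟩ := z
  rcases hyz with ⟨h, -⟩ | ⟨rfl, h | h⟩
  · cases h
    exact absurd hy hz
  · exact absurd (hy.trans (h ▸ List.suffix_cons j a)) hz
  · simp only at h hy hz
    subst h
    obtain h' : w.1 = j :: b := (List.suffix_cons_iff.mp hy).resolve_right hz
    obtain ⟨rfl, rfl⟩ : i = j ∧ v.1 = b := by simpa [hw] using h'
    exact ⟨Prod.ext (Subtype.ext h'.symm) rfl, rfl⟩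

lemma truncatedTree_isBridge {v w : ReducedWord α} {i : α} (hw : w.1 = i :: v.1) :
    (truncatedTree α).IsBridge s((w, i), (v, i)) := by
  refine isBridge_iff_forall_walk_mem_edges.mpr fun p => ?_
  obtain ⟨d, hd, hd₁, hd₂⟩ := p.exists_boundary_dart {y | w.1 <:+ y.1.1} List.suffix_rfl
    (fun h => by simpa [hw] using h.length_le)
  obtain ⟨h₁, h₂⟩ := truncatedTree_eq_of_adj_of_suffix hw d.adj hd₁ hd₂
  have : d.edge = s((w, i), (v, i)) := by simp [Dart.edge, h₁, h₂]
  exact this ▸ List.mem_map_of_mem hd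

lemma truncatedTree_fst_eq_of_mem_darts {u : ReducedWord α × α} {c : (truncatedTree α).Walk u u}
    (hc : c.IsCycle) {d : (truncatedTree α).Dart} (hd : d ∈ c.darts) : d.fst.1 = d.snd.1 := by
  obtain ⟨⟨⟨v, i⟩, ⟨w, j⟩⟩, hadj⟩ := d
  have hd' : s((v, i), (w, j)) ∈ c.edges := List.mem_map_of_mem (f := Dart.edge) hd
  clear hd
  show v = w
  rcases truncatedTree_adj.mp hadj with ⟨h, -⟩ | ⟨h₂, h | h⟩
  · exact h
  · obtain rfl : i = j := h₂
    rw [Sym2.eq_swap] at hd'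
    exact absurd hd' ((truncatedTree_isBridge h).notMem_edges_of_isCycle hc)
  · obtain rfl : i = j := h₂
    exact absurd hd' ((truncatedTree_isBridge h).notMem_edges_of_isCycle hc)

lemma truncatedTree_length_le_card_of_isCycle [Fintype α] {u : ReducedWord α × α}
    {c : (truncatedTree α).Walk u u} (hc : c.IsCycle) : c.length ≤ Fintype.card α := by
  have hfst {y} (hy : y ∈ c.support.tail) : y.1 = u.1 :=
    c.apply_eq_of_mem_support (fun _ hd => truncatedTree_fst_eq_of_mem_darts hc hd)
      (List.mem_of_mem_tail hy)
  have hnodup : (c.support.tail.map Prod.snd).Nodup :=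
    hc.support_nodup.map_on fun a ha b hb h => Prod.ext ((hfst ha).trans (hfst hb).symm) h
  calc c.length = (c.support.tail.map Prod.snd).length := by simp [Walk.length_support]
    _ ≤ Fintype.card α := hnodup.length_le_card

lemma truncatedTree_fin_three_exists_three_adj (x : ReducedWord (Fin 3) × Fin 3) :
    ∃ a b c, a ≠ b ∧ a ≠ c ∧ b ≠ c ∧
      (truncatedTree (Fin 3)).Adj x a ∧ (truncatedTree (Fin 3)).Adj x b ∧
      (truncatedTree (Fin 3)).Adj x c := by
  obtain ⟨w, hw⟩ := truncatedTree_exists_adj_snd_eq x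
  have hfin : ∀ i : Fin 3, i ≠ i + 1 ∧ i ≠ i + 2 ∧ i + 1 ≠ i + 2 := by decide
  obtain ⟨h₁, h₂, h₁₂⟩ := hfin x.2
  have hne : x.1 ≠ w := fun h => hw.ne (Prod.ext h rfl)
  refine ⟨(x.1, x.2 + 1), (x.1, x.2 + 2), (w, x.2), ?_, ?_, ?_, Or.inl ⟨rfl, h₁⟩,
    Or.inl ⟨rfl, h₂⟩, hw⟩ <;> simp [h₁₂, hne]

end SimpleGraph

open SimpleGraph

/-- For every finite tree `H` that is not a path, there is a (possibly infinite)
simple graph `G` with minimum degree at least `3` (every vertex has three distinct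
neighbors) that has no induced subgraph isomorphic to `H` and no cycle of length a
power of `2`. -/
theorem exists_graph_min_degree_three_tree_free_no_pow_two_cycle
    {W : Type*} [Fintype W] (H : SimpleGraph W)
    (htree : H.Connected ∧ H.IsAcyclic)
    (hnotpath : ¬ ∃ k : ℕ, Nonempty (H ≃g SimpleGraph.pathGraph k)) :
    ∃ (V : Type) (G : SimpleGraph V),
      (∀ v : V, ∃ a b c : V, a ≠ b ∧ a ≠ c ∧ b ≠ c ∧ G.Adj v a ∧ G.Adj v b ∧ G.Adj v c) ∧
      ¬ Nonempty (H ↪g G) ∧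
      ¬ ∃ (v : V) (w : G.Walk v v), w.IsCycle ∧ ∃ k : ℕ, w.length = 2 ^ k := by
  refine ⟨_, truncatedTree (Fin 3), truncatedTree_fin_three_exists_three_adj, ?_, ?_⟩
  · rintro ⟨f⟩
    exact hnotpath (IsTree.exists_iso_pathGraph_of_isClawFree ⟨htree.1, htree.2⟩
      (truncatedTree_isClawFree.comap f))
  · rintro ⟨v, c, hc, k, hk⟩
    have hle := truncatedTree_length_le_card_of_isCycle hc
    have hge := hc.three_le_length
    rw [Fintype.card_fin] at hle
    rcases k with _ | k
    · omega
    · rw [pow_succ] at hk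
      omega
end

section
/- There exists a $3$-regular simple graph on $24$ vertices that contains no cycle of length $4$ and no cycle of length $8$ but contains a cycle of length $16$; moreover, this graph is $P_{18}$-free and contains an induced subgraph isomorphic to $P_{17}$. (The Markström graph is such a graph.) -/
/-!
The witness is the Markström graph. Every property is a finite check, made feasible by
enumerating paths rather than walks or maps: a cycle of length `n + 2` is a simple path on
`n + 2` vertices whose ends are adjacent, and a simple path can be grown one vertex at a time
from the neighbour lists of its current end. Growing all simple paths on `4` and `8` vertices,
none has adjacent ends; growing all induced paths, none reaches `18` vertices. The `16`-cycle
and the induced `P₁₇` are given explicitly.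
-/

namespace SimpleGraph

section PathEnumeration

variable {V : Type*}

/-- The lists `[vₙ, …, v₁, v₀]` with `v₀ ∈ vs` and, for each `i < n`, `vᵢ₊₁ ∈ nbrs vᵢ` and
`ok vᵢ₊₁ [vᵢ, …, v₀]`. -/
def growLists (vs : List V) (nbrs : V → List V) (ok : V → List V → Prop)
    [∀ v l, Decidable (ok v l)] : ℕ → List (List V)
  | 0 => vs.map ([·])
  | n + 1 => (growLists vs nbrs ok n).flatMap fun
      | [] => []
      | v :: p => ((nbrs v).filter (ok · (v :: p))).map (· :: v :: p)

variable {vs : List V} {nbrs : V → List V} {ok : V → List V → Prop} [∀ v l, Decidable (ok v l)]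

theorem singleton_mem_growLists {v : V} (hv : v ∈ vs) : [v] ∈ growLists vs nbrs ok 0 :=
  List.mem_map_of_mem hv

theorem cons_mem_growLists_succ {n : ℕ} {w v : V} {p : List V}
    (hp : v :: p ∈ growLists vs nbrs ok n) (hw : w ∈ nbrs v) (hok : ok w (v :: p)) :
    w :: v :: p ∈ growLists vs nbrs ok (n + 1) :=
  List.mem_flatMap.mpr ⟨v :: p, hp, List.mem_map_of_mem (List.mem_filter.mpr ⟨hw, by simpa⟩)⟩

variable [DecidableEq V]

def simplePaths (vs : List V) (nbrs : V → List V) : ℕ → List (List V) :=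
  growLists vs nbrs fun w l => w ∉ l

def inducedPaths (G : SimpleGraph V) [DecidableRel G.Adj] (vs : List V) (nbrs : V → List V) :
    ℕ → List (List V) :=
  growLists vs nbrs fun w l => w ∉ l ∧ ∀ u ∈ l.tail, ¬ G.Adj w u

end PathEnumeration

def pathGraph.succEmb (n : ℕ) : pathGraph n ↪g pathGraph (n + 1) where
  toEmbedding := Fin.succEmb n
  map_rel_iff' := by simp [pathGraph_adj]

variable {V : Type*} [DecidableEq V] {G : SimpleGraph V} {vs : List V} {nbrs : V → List V}

theorem ofFn_mem_simplePaths (hvs : ∀ v, v ∈ vs) (hnbrs : ∀ v w, G.Adj v w → w ∈ nbrs v) :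
    ∀ {n : ℕ} (f : Copy (pathGraph (n + 1)) G), List.ofFn f ∈ simplePaths vs nbrs n
  | 0, f => singleton_mem_growLists (hvs _)
  | n + 1, f => by
    have ih : List.ofFn (fun i => f i.succ) ∈ simplePaths vs nbrs n :=
      ofFn_mem_simplePaths hvs hnbrs (f.comp (pathGraph.succEmb _).toCopy)
    rw [List.ofFn_succ] at ih
    rw [List.ofFn_succ, List.ofFn_succ]
    refine cons_mem_growLists_succ ih (hnbrs _ _ (f.toHom.map_adj ?_)) ?_
    · simp [pathGraph_adj]
    · simp only [List.mem_cons, List.mem_ofFn, not_or, not_exists]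
      refine ⟨fun h => ?_, fun i h => ?_⟩ <;> simpa [Fin.ext_iff] using f.injective h

theorem ofFn_mem_inducedPaths [DecidableRel G.Adj] (hvs : ∀ v, v ∈ vs)
    (hnbrs : ∀ v w, G.Adj v w → w ∈ nbrs v) :
    ∀ {n : ℕ} (f : pathGraph (n + 1) ↪g G), List.ofFn f ∈ inducedPaths G vs nbrs n
  | 0, f => singleton_mem_growLists (hvs _)
  | n + 1, f => by
    have ih : List.ofFn (fun i => f i.succ) ∈ inducedPaths G vs nbrs n :=
      ofFn_mem_inducedPaths hvs hnbrs (f.comp (pathGraph.succEmb _))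
    rw [List.ofFn_succ] at ih
    rw [List.ofFn_succ, List.ofFn_succ]
    refine cons_mem_growLists_succ ih (hnbrs _ _ (f.map_adj_iff.mpr ?_)) ⟨?_, ?_⟩
    · simp [pathGraph_adj]
    · simp only [List.mem_cons, List.mem_ofFn, not_or, not_exists]
      refine ⟨fun h => ?_, fun i h => ?_⟩ <;> simpa [Fin.ext_iff] using f.injective h
    · simp only [List.tail_cons, List.mem_ofFn, forall_exists_index, forall_apply_eq_imp_iff]
      intro i
      simp [f.map_adj_iff, pathGraph_adj]

theorem cycleGraph_free_of_forall_simplePaths (hvs : ∀ v, v ∈ vs)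
    (hnbrs : ∀ v w, G.Adj v w → w ∈ nbrs v) {n : ℕ}
    (h : ∀ l ∈ simplePaths vs nbrs (n + 1), ∀ a ∈ l.head?, ∀ b ∈ l.getLast?, ¬ G.Adj b a) :
    (cycleGraph (n + 2)).Free G := by
  rintro ⟨f⟩
  have hmem := ofFn_mem_simplePaths hvs hnbrs (f.comp (Copy.ofLE _ _ pathGraph_le_cycleGraph))
  refine h _ hmem (f 0) (by simp [List.ofFn_succ]) (f (Fin.last _)) ?_ (f.toHom.map_adj ?_)
  · rw [Option.mem_def, List.getLast?_eq_some_getLast (by simp), List.getLast_ofFn]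
    rfl
  · rw [cycleGraph_adj]; right; simp

theorem pathGraph_not_isIndContained_of_inducedPaths_eq_nil [DecidableRel G.Adj]
    (hvs : ∀ v, v ∈ vs) (hnbrs : ∀ v w, G.Adj v w → w ∈ nbrs v) {n : ℕ}
    (h : inducedPaths G vs nbrs n = []) : ¬ pathGraph (n + 1) ⊴ G := by
  rintro ⟨f⟩
  simpa [h] using ofFn_mem_inducedPaths hvs hnbrs f

def markstromNeighbors : Fin 24 → List (Fin 24) :=
  ![[3, 6, 9], [10, 12, 15], [7, 11, 18], [0, 8, 9], [5, 9, 23], [4, 15, 23],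
    [0, 14, 17], [2, 12, 22], [3, 13, 14], [0, 3, 4], [1, 15, 16], [2, 13, 21],
    [1, 7, 22], [8, 11, 21], [6, 8, 17], [1, 5, 10], [10, 17, 22], [6, 14, 16],
    [2, 19, 20], [18, 20, 23], [18, 19, 21], [11, 13, 20], [7, 12, 16], [4, 5, 19]]

def markstromGraph : SimpleGraph (Fin 24) where
  Adj v w := w ∈ markstromNeighbors v
  symm := ⟨by decide⟩
  loopless := ⟨by decide⟩

instance : DecidableRel markstromGraph.Adj :=
  fun v w => inferInstanceAs (Decidable (w ∈ markstromNeighbors v))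

namespace markstromGraph

theorem degree_eq_three : ∀ v, markstromGraph.degree v = 3 := by decide

theorem cycleGraph_four_free : (cycleGraph 4).Free markstromGraph :=
  cycleGraph_free_of_forall_simplePaths List.mem_finRange (fun _ _ => id) (by decide +kernel)

theorem cycleGraph_eight_free : (cycleGraph 8).Free markstromGraph :=
  cycleGraph_free_of_forall_simplePaths List.mem_finRange (fun _ _ => id) (by decide +kernel)

def cycleGraphHom : cycleGraph 16 →g markstromGraph where
  toFun := ![0, 3, 8, 13, 11, 2, 7, 12, 22, 16, 10, 1, 15, 5, 4, 9]
  map_rel' := by decide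

theorem cycleGraph_sixteen_isContained : cycleGraph 16 ⊑ markstromGraph :=
  ⟨cycleGraphHom.toCopy (by decide)⟩

theorem pathGraph_eighteen_not_isIndContained : ¬ pathGraph 18 ⊴ markstromGraph :=
  pathGraph_not_isIndContained_of_inducedPaths_eq_nil List.mem_finRange (fun _ _ => id)
    (by decide +kernel)

def pathGraphEmbedding : pathGraph 17 ↪g markstromGraph where
  toFun := ![23, 5, 15, 10, 16, 22, 7, 2, 18, 20, 21, 13, 8, 14, 6, 0, 9]
  inj' := by decide
  map_rel_iff' := by simp only [pathGraph_adj]; decide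

end markstromGraph

end SimpleGraph

/-- There exists a `3`-regular simple graph on `24` vertices with no `4`-cycle and
no `8`-cycle but with a `16`-cycle; moreover it is `P₁₈`-free and contains an
induced `P₁₇`. (The Markström graph is such a graph.) -/
theorem exists_markstrom_like_graph :
    ∃ G : SimpleGraph (Fin 24),
      (∀ v, (G.neighborSet v).ncard = 3) ∧
      (¬ ∃ (v : Fin 24) (w : G.Walk v v), w.IsCycle ∧ w.length = 4) ∧
      (¬ ∃ (v : Fin 24) (w : G.Walk v v), w.IsCycle ∧ w.length = 8) ∧
      (∃ (v : Fin 24) (w : G.Walk v v), w.IsCycle ∧ w.length = 16) ∧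
      ¬ Nonempty (SimpleGraph.pathGraph 18 ↪g G) ∧
      Nonempty (SimpleGraph.pathGraph 17 ↪g G) := by
  open SimpleGraph markstromGraph in
  refine ⟨markstromGraph, fun v => ?_, ?_, ?_, ?_,
    pathGraph_eighteen_not_isIndContained, ⟨pathGraphEmbedding⟩⟩
  · rw [Set.ncard_eq_toFinset_card']
    exact degree_eq_three v
  · rw [← cycleGraph_isContained_iff (by norm_num)]
    exact cycleGraph_four_free
  · rw [← cycleGraph_isContained_iff (by norm_num)]
    exact cycleGraph_eight_free
  · rw [← cycleGraph_isContained_iff (by norm_num)]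
    exact cycleGraph_sixteen_isContained
end
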